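/- For each x ∈ X and each k ∈ ℕ there exists a unique partition of ℤ into consecutive intervals of length 2^{k+1} — i.e., a unique offset r ∈ {0,…,2^{k+1}−1}, the intervals being [r + m·2^{k+1}, r + (m+1)·2^{k+1}) for m ∈ ℤ — such that the subword of x on each interval of the partition is either u_k ū_k or ū_k u_k. -/

import Mathlib

/-- The substitution σ on symbols: σ(0) = 01, σ(1) = 10 (with 0 ↔ `false`, 1 ↔ `true`). -/
def sigmaSub (b : Bool) : List Bool := [b, !b]

/-- The substitution σ extended to words by concatenation. -/
def subst (w : List Bool) : List Bool := w.flatMap sigmaSub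

/-- The flip of a binary word: exchange 0 and 1 in every position. -/
def flipWord (w : List Bool) : List Bool := w.map (fun b => !b)

/-- u_k = σ^k(0). -/
def uWord : ℕ → List Bool
  | 0 => [false]
  | k + 1 => subst (uWord k)

/-- The Morse sequence: its first 2^k symbols form the word u_k for every k. -/
def morse (n : ℕ) : Bool := (uWord (n + 1)).getD n false

/-- The subword of `x` on the interval `[p, p + w.length)` is the word `w`. -/
def readsWord (x : ℤ → Bool) (p : ℤ) (w : List Bool) : Prop :=
  ∀ j : ℕ, j < w.length → x (p + j) = w.getD j false

/-- The Morse minimal set X: bi-infinite sequences all of whose finite subwords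
occur in the Morse sequence. -/
def morseShiftX : Set (ℤ → Bool) :=
  {x | ∀ (a : ℤ) (l : ℕ), ∃ s : ℕ, ∀ j : ℕ, j < l → x (a + j) = morse (s + j)}

/-- The left shift T. -/
def shiftT (x : ℤ → Bool) : ℤ → Bool := fun i => x (i + 1)

/-!
The argument works for every overlap-free `x` (no factor `a w a w a`); the sequences of `X` are
overlap-free because, by Thue, the Morse sequence is.

By induction on `n`, the offsets of the partitions of `x` into blocks `u_n`, `ū_n` of length
`2 ^ n` form a single residue class modulo `2 ^ n`. Such a partition refines to level `n + 1`
exactly when its blocks pair up as `u_n ū_n` or `ū_n u_n`, i.e. when the first letters of the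
blocks differ within aligned pairs. These first letters form an overlap-free sequence again, and
in an overlap-free binary sequence any two equal adjacent letters `y m = y (m + 1)` occur at
positions of the same parity, so exactly one of the two candidate refinements works.
-/

lemma subst_append (u v : List Bool) : subst (u ++ v) = subst u ++ subst v := by
  simp [subst]

lemma flipWord_append (u v : List Bool) : flipWord (u ++ v) = flipWord u ++ flipWord v := by
  simp [flipWord]

lemma flipWord_flipWord (w : List Bool) : flipWord (flipWord w) = w := by
  simp [flipWord, Function.comp_def]

@[simp]
lemma flipWord_length (w : List Bool) : (flipWord w).length = w.length := by
  simp [flipWord]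

lemma subst_flipWord (w : List Bool) : subst (flipWord w) = flipWord (subst w) := by
  induction w with
  | nil => rfl
  | cons a w ih => simp_all [subst, flipWord, sigmaSub]

lemma uWord_succ (k : ℕ) : uWord (k + 1) = uWord k ++ flipWord (uWord k) := by
  induction k with
  | zero => rfl
  | succ k ih => rw [uWord, ih, subst_append, subst_flipWord, ← ih, uWord]

lemma flipWord_uWord_succ (k : ℕ) : flipWord (uWord (k + 1)) = flipWord (uWord k) ++ uWord k := by
  rw [uWord_succ, flipWord_append, flipWord_flipWord]

@[simp]
lemma uWord_length (k : ℕ) : (uWord k).length = 2 ^ k := by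
  induction k with
  | zero => rfl
  | succ k ih => rw [uWord_succ, List.length_append, flipWord_length, ih, pow_succ, mul_two]

lemma uWord_eq_false_cons (k : ℕ) : ∃ w, uWord k = false :: w := by
  induction k with
  | zero => exact ⟨[], rfl⟩
  | succ k ih =>
    obtain ⟨w, hw⟩ := ih
    exact ⟨true :: subst w, by rw [uWord, hw]; rfl⟩

lemma subst_getD_two_mul (w : List Bool) (n : ℕ) :
    (subst w).getD (2 * n) false = w.getD n false := by
  induction w generalizing n with
  | nil => simp [subst]
  | cons a w ih => cases n <;> simp_all [subst, sigmaSub, Nat.mul_succ]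

lemma subst_getD_two_mul_add_one (w : List Bool) (n : ℕ) (hn : n < w.length) :
    (subst w).getD (2 * n + 1) false = !w.getD n false := by
  induction w generalizing n with
  | nil => simp at hn
  | cons a w ih => cases n <;> simp_all [subst, sigmaSub, Nat.mul_succ]

lemma uWord_getD_of_le {K K' n : ℕ} (hK : K ≤ K') (hn : n < 2 ^ K) :
    (uWord K').getD n false = (uWord K).getD n false := by
  induction K', hK using Nat.le_induction with
  | base => rfl
  | succ K' hK ih =>
    have hn' : n < (uWord K').length := by simpa using hn.trans_le (Nat.pow_le_pow_right two_pos hK)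
    rw [uWord_succ, List.getD_append _ _ _ _ hn', ih]

lemma morse_eq_uWord_getD {K n : ℕ} (hn : n < 2 ^ K) : morse n = (uWord K).getD n false := by
  have hn' : n < 2 ^ (n + 1) := n.lt_two_pow_self.trans (Nat.pow_lt_pow_succ one_lt_two)
  rw [morse, ← uWord_getD_of_le (le_max_left (n + 1) K) hn',
    uWord_getD_of_le (le_max_right _ _) hn]

lemma morse_two_mul (n : ℕ) : morse (2 * n) = morse n := by
  have hn : n < 2 ^ (n + 1) := n.lt_two_pow_self.trans (Nat.pow_lt_pow_succ one_lt_two)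
  rw [morse_eq_uWord_getD (K := n + 2) (by rw [pow_succ]; omega), uWord, subst_getD_two_mul,
    morse_eq_uWord_getD hn]

lemma morse_two_mul_add_one (n : ℕ) : morse (2 * n + 1) = !morse n := by
  have hn : n < 2 ^ (n + 1) := n.lt_two_pow_self.trans (Nat.pow_lt_pow_succ one_lt_two)
  rw [morse_eq_uWord_getD (K := n + 2) (by rw [pow_succ]; omega), uWord,
    subst_getD_two_mul_add_one _ _ (by simpa using hn), morse_eq_uWord_getD hn]

lemma apply_eq_apply_zero_iff_even {g : ℕ → Bool} {n : ℕ} (h : ∀ r < n, g r ≠ g (r + 1)) :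
    g n = g 0 ↔ Even n := by
  induction n with
  | zero => simp
  | succ n ih =>
    rw [Bool.eq_not_of_ne (h n n.lt_succ_self).symm, Nat.even_add_one,
      ← ih fun r hr => h r (hr.trans n.lt_succ_self)]
    cases g n <;> cases g 0 <;> simp

/-- The overlap would carry the alternation of the aligned pairs over the odd shift `p` to the
unaligned ones, so `y` would alternate on `[s, s + p]`, against `y s = y (s + p)`. -/
lemma not_overlap_of_odd_of_forall_ne (y : ℕ → Bool) (hy : ∀ n, y (2 * n) ≠ y (2 * n + 1))
    {p : ℕ} (hp : Odd p) (s : ℕ) : ¬ ∀ i ≤ p, y (s + i) = y (s + (i + p)) := by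
  intro H
  have alt : ∀ r < p, y (s + r) ≠ y (s + (r + 1)) := by
    intro r hr
    obtain ⟨m, hm | hm⟩ := Nat.even_or_odd' (s + r)
    · rw [← add_assoc, hm]
      exact hy m
    · obtain ⟨c, rfl⟩ := hp
      rw [H r hr.le, H (r + 1) hr, show s + (r + (2 * c + 1)) = 2 * (m + c + 1) by omega,
        show s + (r + 1 + (2 * c + 1)) = 2 * (m + c + 1) + 1 by omega]
      exact hy _
  have := (apply_eq_apply_zero_iff_even (g := fun r => y (s + r)) alt).mp
    (by simpa using (H 0 (Nat.zero_le p)).symm)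
  exact (Nat.not_even_iff_odd.mpr hp) this

lemma morse_not_overlap {p : ℕ} (hp : 0 < p) (s : ℕ) :
    ¬ ∀ i ≤ p, morse (s + i) = morse (s + (i + p)) := by
  induction p using Nat.strong_induction_on generalizing s with
  | _ p IH =>
    obtain ⟨q, rfl | rfl⟩ := Nat.even_or_odd' p
    -- an overlap of period `2q` desubstitutes to one of period `q`
    · obtain ⟨a, rfl | rfl⟩ := Nat.even_or_odd' s
      · refine fun H => IH q (by omega) (by omega) a fun i hi => ?_
        have := H (2 * i) (by omega)
        rwa [← mul_add, ← mul_add, ← mul_add, morse_two_mul, morse_two_mul] at this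
      · refine fun H => IH q (by omega) (by omega) a fun i hi => ?_
        have := H (2 * i) (by omega)
        rwa [show 2 * a + 1 + 2 * i = 2 * (a + i) + 1 by ring,
          show 2 * a + 1 + (2 * i + 2 * q) = 2 * (a + (i + q)) + 1 by ring,
          morse_two_mul_add_one, morse_two_mul_add_one, Bool.not_inj_iff] at this
    · exact not_overlap_of_odd_of_forall_ne morse
        (fun n => by rw [morse_two_mul, morse_two_mul_add_one]; simp) ⟨q, rfl⟩ s

/-- No factor `a w a w a`, i.e. no factor of length `2p + 1` with period `p > 0`. -/
def OverlapFree {α : Type*} (y : ℤ → α) : Prop :=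
  ∀ (s : ℤ) (p : ℕ), 0 < p → ¬ ∀ i ≤ p, y (s + i) = y (s + (i + p : ℕ))

lemma overlapFree_of_mem_morseShiftX {x : ℤ → Bool} (hx : x ∈ morseShiftX) :
    OverlapFree x := by
  intro s p hp H
  obtain ⟨t, ht⟩ := hx s (2 * p + 1)
  refine morse_not_overlap hp t fun i hi => ?_
  rw [← ht i (by omega), ← ht (i + p) (by omega)]
  exact H i hi

namespace OverlapFree

lemma comp_add {α : Type*} {y : ℤ → α} (hy : OverlapFree y) (s : ℤ) :
    OverlapFree fun i => y (s + i) := by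
  intro t p hp H
  exact hy (s + t) p hp fun i hi => by simpa only [add_assoc] using H i hi

variable {y : ℤ → Bool}

lemma exists_eq_succ (hy : OverlapFree y) : ∃ m, y m = y (m + 1) := by
  -- otherwise `y 0 … y 4` would be the overlap `a b a b a`
  by_contra! h
  refine hy 0 2 two_pos fun i hi => ?_
  have := h 0; have := h 1; have := h 2; have := h 3
  clear h
  interval_cases i <;> norm_num at * <;> simp_all [← Bool.eq_not_iff]

lemma ne_of_eq (hy : OverlapFree y) (s : ℤ) (h : y s = y (s + 1)) : y (s + 1) ≠ y (s + 2) := by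
  intro h'
  refine hy s 1 one_pos fun i hi => ?_
  interval_cases i <;> norm_num [h, h']

lemma ne_add_three_of_eq (hy : OverlapFree y) (h : y 0 = y 1) : y 3 ≠ y 4 := by
  -- otherwise `y (-1) … y 5` would be the overlap `b a a b a a b`
  intro h'
  have := hy.ne_of_eq (-1)
  have := hy.ne_of_eq 0
  have := hy.ne_of_eq 2
  have := hy.ne_of_eq 3
  refine hy (-1) 3 three_pos fun i hi => ?_
  interval_cases i <;> norm_num at * <;> simp_all [← Bool.eq_not_iff]

lemma eq_add_two_or_eq_add_four (hy : OverlapFree y) (h : y 0 = y 1) : y 2 = y 3 ∨ y 4 = y 5 := by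
  -- otherwise `y 1 … y 5` would be the overlap `a b a b a`
  by_contra! h'
  have := hy.ne_of_eq 0 h
  have := hy.ne_add_three_of_eq h
  refine hy 1 2 two_pos fun i hi => ?_
  interval_cases i <;> norm_num at * <;> simp_all [← Bool.eq_not_iff]

/-- Consecutive equal pairs `y m = y (m + 1)` lie at distance 2 or 4, so never at odd distance. -/
lemma ne_of_eq_of_odd (hy : OverlapFree y) {m : ℤ} (h : y m = y (m + 1)) (k : ℕ) :
    y (m + (2 * k + 1 : ℕ)) ≠ y (m + (2 * k + 1 : ℕ) + 1) := by
  replace h : y (m + 0) = y (m + 1) := by rwa [add_zero]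
  induction k using Nat.strong_induction_on generalizing m with
  | _ k IH =>
    rcases k with _ | _ | k
    · simpa [add_assoc] using (hy.comp_add m).ne_of_eq 0 h
    · simpa [add_assoc] using (hy.comp_add m).ne_add_three_of_eq h
    · rcases (hy.comp_add m).eq_add_two_or_eq_add_four h with h2 | h4
      · have h2 : y (m + 2 + 0) = y (m + 2 + 1) := by simpa [add_assoc] using h2
        convert IH (k + 1) (by omega) h2 using 2 <;> push_cast <;> ring
      · have h4 : y (m + 4 + 0) = y (m + 4 + 1) := by simpa [add_assoc] using h4
        convert IH k (by omega) h4 using 2 <;> push_cast <;> ring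

lemma modEq_of_eq_of_eq (hy : OverlapFree y) {m m' : ℤ} (h : y m = y (m + 1))
    (h' : y m' = y (m' + 1)) : m ≡ m' [ZMOD 2] := by
  wlog hle : m ≤ m' generalizing m m'
  · exact (this h' h (le_of_not_ge hle)).symm
  obtain ⟨d, rfl⟩ := Int.le.dest hle
  obtain ⟨k, rfl | rfl⟩ := Nat.even_or_odd' d
  · exact Int.modEq_iff_dvd.mpr ⟨k, by push_cast; ring⟩
  · exact absurd h' (hy.ne_of_eq_of_odd h k)

/-- `ε` is `m + 1` for any equal pair `y m = y (m + 1)`. -/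
lemma exists_forall_ne_iff_modEq (hy : OverlapFree y) :
    ∃ ε : ℤ, ∀ t, (∀ m, y (t + 2 * m) ≠ y (t + 2 * m + 1)) ↔ t ≡ ε [ZMOD 2] := by
  obtain ⟨m₀, h₀⟩ := hy.exists_eq_succ
  refine ⟨m₀ + 1, fun t => ⟨fun ht => ?_, fun ht m hm => ?_⟩⟩
  · by_contra hne
    obtain ⟨j, hj⟩ : (2 : ℤ) ∣ m₀ - t := by
      rw [Int.ModEq] at hne; omega
    exact ht j (by rwa [show t + 2 * j = m₀ by omega])
  · have := hy.modEq_of_eq_of_eq h₀ hm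
    rw [Int.ModEq] at this ht; omega

end OverlapFree

section Blocks

variable {x : ℤ → Bool} {n : ℕ}

lemma readsWord_append {p : ℤ} {u v : List Bool} :
    readsWord x p (u ++ v) ↔ readsWord x p u ∧ readsWord x (p + u.length) v := by
  constructor
  · intro h
    refine ⟨fun j hj => ?_, fun j hj => ?_⟩
    · rw [h j (by simp; omega), List.getD_append _ _ _ _ hj]
    · rw [add_assoc, ← Nat.cast_add, h _ (by simp; omega),
        List.getD_append_right _ _ _ _ (by omega), Nat.add_sub_cancel_left]
  · rintro ⟨hu, hv⟩ j hj
    rcases lt_or_ge j u.length with hju | hju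
    · rw [List.getD_append _ _ _ _ hju, hu j hju]
    · rw [List.getD_append_right _ _ _ _ hju, ← hv _ (by simp at hj; omega), add_assoc,
        ← Nat.cast_add, Nat.add_sub_cancel' hju]

lemma readsWord_cons {p : ℤ} {a : Bool} {w : List Bool} :
    readsWord x p (a :: w) ↔ x p = a ∧ readsWord x (p + 1) w := by
  rw [← List.singleton_append, readsWord_append]
  simp [readsWord]

def IsMorseBlock (x : ℤ → Bool) (n : ℕ) (p : ℤ) : Prop :=
  readsWord x p (uWord n) ∨ readsWord x p (flipWord (uWord n))

lemma readsWord_uWord_iff {p : ℤ} :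
    readsWord x p (uWord n) ↔ IsMorseBlock x n p ∧ x p = false := by
  obtain ⟨w, hw⟩ := uWord_eq_false_cons n
  simp only [IsMorseBlock, hw, flipWord, List.map_cons, readsWord_cons]
  cases x p <;> simp

lemma readsWord_flipWord_uWord_iff {p : ℤ} :
    readsWord x p (flipWord (uWord n)) ↔ IsMorseBlock x n p ∧ x p = true := by
  obtain ⟨w, hw⟩ := uWord_eq_false_cons n
  simp only [IsMorseBlock, hw, flipWord, List.map_cons, readsWord_cons]
  cases x p <;> simp

lemma isMorseBlock_succ_iff {p : ℤ} :
    IsMorseBlock x (n + 1) p ↔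
      IsMorseBlock x n p ∧ IsMorseBlock x n (p + 2 ^ n) ∧ x p ≠ x (p + 2 ^ n) := by
  rw [IsMorseBlock, flipWord_uWord_succ, uWord_succ]
  simp only [readsWord_append, flipWord_length, uWord_length, Nat.cast_pow, Nat.cast_ofNat,
    readsWord_uWord_iff, readsWord_flipWord_uWord_iff]
  cases x p <;> cases x (p + 2 ^ n) <;> simp

lemma IsMorseBlock.apply_add_eq {p q : ℤ} (hp : IsMorseBlock x n p) (hq : IsMorseBlock x n q)
    (h : x p = x q) {j : ℕ} (hj : j < 2 ^ n) : x (p + j) = x (q + j) := by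
  cases hxq : x q
  · rw [readsWord_uWord_iff.mpr ⟨hp, h.trans hxq⟩ j (by simpa),
      readsWord_uWord_iff.mpr ⟨hq, hxq⟩ j (by simpa)]
  · rw [readsWord_flipWord_uWord_iff.mpr ⟨hp, h.trans hxq⟩ j (by simpa),
      readsWord_flipWord_uWord_iff.mpr ⟨hq, hxq⟩ j (by simpa)]

def IsMorsePartition (x : ℤ → Bool) (n : ℕ) (r : ℤ) : Prop :=
  ∀ m : ℤ, IsMorseBlock x n (r + m * 2 ^ n)

lemma isMorsePartition_zero (x : ℤ → Bool) (r : ℤ) : IsMorsePartition x 0 r := by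
  intro m
  simp only [IsMorseBlock, uWord, flipWord, List.map_cons, List.map_nil, readsWord_cons]
  cases x (r + m * 2 ^ 0) <;> simp [readsWord]

lemma isMorsePartition_succ_iff {r : ℤ} :
    IsMorsePartition x (n + 1) r ↔
      IsMorsePartition x n r ∧
        ∀ m : ℤ, x (r + 2 * m * 2 ^ n) ≠ x (r + (2 * m + 1) * 2 ^ n) := by
  have hpos : ∀ m : ℤ, r + m * 2 ^ (n + 1) = r + 2 * m * 2 ^ n := fun m => by ring
  have hpos' : ∀ m : ℤ, r + 2 * m * 2 ^ n + 2 ^ n = r + (2 * m + 1) * 2 ^ n := fun m => by ring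
  simp only [IsMorsePartition, isMorseBlock_succ_iff, hpos, hpos']
  refine ⟨fun h => ⟨fun m => ?_, fun m => (h m).2.2⟩,
    fun ⟨h, h'⟩ m => ⟨h _, h _, h' m⟩⟩
  obtain ⟨t, rfl | rfl⟩ := Int.even_or_odd' m
  exacts [(h t).1, (h t).2.1]

/-- An overlap of period `p` among the block heads spreads out to one of period `p 2 ^ n`
in `x`. -/
lemma IsMorsePartition.overlapFree_heads {r : ℤ} (hx : OverlapFree x)
    (h : IsMorsePartition x n r) : OverlapFree fun m => x (r + m * 2 ^ n) := by
  intro s p hp H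
  refine hx (r + s * 2 ^ n) (p * 2 ^ n) (by positivity) fun i hi => ?_
  obtain ⟨q, j, hj, rfl⟩ : ∃ q j, j < 2 ^ n ∧ i = q * 2 ^ n + j :=
    ⟨i / 2 ^ n, i % 2 ^ n, Nat.mod_lt _ (by positivity), (Nat.div_add_mod' i _).symm⟩
  have hq : q ≤ p := Nat.le_of_mul_le_mul_right (by omega) (by positivity : 0 < 2 ^ n)
  convert (h _).apply_add_eq (h _) (H q hq) hj using 2 <;> push_cast <;> ring

end Blocks

lemma add_mul_two_pow_modEq_iff {r t ε : ℤ} {n : ℕ} :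
    r + t * 2 ^ n ≡ r + ε * 2 ^ n [ZMOD 2 ^ (n + 1)] ↔ t ≡ ε [ZMOD 2] := by
  rw [Int.modEq_iff_dvd, Int.modEq_iff_dvd, pow_succ', show r + ε * 2 ^ n - (r + t * 2 ^ n)
    = (ε - t) * 2 ^ n by ring, Int.mul_dvd_mul_iff_right (by positivity)]

lemma exists_eq_add_mul_of_modEq {a b c : ℤ} (h : a ≡ b [ZMOD c]) : ∃ t, a = b + t * c := by
  obtain ⟨t, ht⟩ := Int.modEq_iff_dvd.mp h.symm
  exact ⟨t, by linarith⟩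

/-- The level-`n` partitions of `x` are at the offsets `r + t 2 ^ n`; the one at `r + t 2 ^ n`
refines to level `n + 1` iff the block heads pair up into distinct letters from `t` on, which
happens for exactly one parity of `t` since the heads form an overlap-free sequence. -/
lemma exists_forall_isMorsePartition_succ_iff_modEq {x : ℤ → Bool} {n : ℕ} {r : ℤ}
    (hx : OverlapFree x) (hr : ∀ r', IsMorsePartition x n r' ↔ r' ≡ r [ZMOD 2 ^ n]) :
    ∃ r₁, ∀ r', IsMorsePartition x (n + 1) r' ↔ r' ≡ r₁ [ZMOD 2 ^ (n + 1)] := by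
  obtain ⟨ε, hε⟩ := ((hr r).mpr rfl |>.overlapFree_heads hx).exists_forall_ne_iff_modEq
  have hheads : ∀ t, (∀ m : ℤ, x (r + t * 2 ^ n + 2 * m * 2 ^ n) ≠
      x (r + t * 2 ^ n + (2 * m + 1) * 2 ^ n)) ↔ t ≡ ε [ZMOD 2] := fun t => by
    rw [← hε t]
    refine forall_congr' fun m => ?_
    rw [show r + t * 2 ^ n + 2 * m * 2 ^ n = r + (t + 2 * m) * 2 ^ n by ring,
      show r + t * 2 ^ n + (2 * m + 1) * 2 ^ n = r + (t + 2 * m + 1) * 2 ^ n by ring]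
  refine ⟨r + ε * 2 ^ n, fun r' => ?_⟩
  rw [isMorsePartition_succ_iff, hr]
  refine ⟨fun ⟨hr', hne⟩ => ?_, fun h => ?_⟩
  · obtain ⟨t, rfl⟩ := exists_eq_add_mul_of_modEq hr'
    exact add_mul_two_pow_modEq_iff.mpr ((hheads t).mp hne)
  · rw [pow_succ'] at h
    have hr' : r' ≡ r [ZMOD 2 ^ n] :=
      Int.modEq_add_mul_modulus_iff.mp (h.of_mul_left 2)
    obtain ⟨t, rfl⟩ := exists_eq_add_mul_of_modEq hr'
    exact ⟨hr', (hheads t).mpr (add_mul_two_pow_modEq_iff.mp (by rwa [pow_succ']))⟩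

lemma exists_forall_isMorsePartition_iff_modEq {x : ℤ → Bool} (hx : OverlapFree x) (n : ℕ) :
    ∃ r, ∀ r', IsMorsePartition x n r' ↔ r' ≡ r [ZMOD 2 ^ n] := by
  induction n with
  | zero => exact ⟨0, fun r' => by simp [isMorsePartition_zero, Int.modEq_one]⟩
  | succ n ih =>
    obtain ⟨r, hr⟩ := ih
    exact exists_forall_isMorsePartition_succ_iff_modEq hx hr

lemma existsUnique_nat_lt_of_forall_iff_modEq {P : ℤ → Prop} {N : ℕ} {r : ℤ} (hN : 0 < N)
    (hP : ∀ r', P r' ↔ r' ≡ r [ZMOD N]) : ∃! r' : ℕ, r' < N ∧ P r' := by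
  have h₀ : 0 ≤ r % N := Int.emod_nonneg r (by omega)
  have h₁ : r % N < N := Int.emod_lt_of_pos r (by omega)
  refine ⟨(r % N).toNat, ⟨by omega, (hP _).mpr ?_⟩, fun r' ⟨hr', hPr'⟩ => ?_⟩
  · rw [Int.toNat_of_nonneg h₀]
    exact Int.mod_modEq r N
  · have := (hP r').mp hPr'
    rw [Int.ModEq, Int.emod_eq_of_lt (by omega) (by omega)] at this
    omega

/-- For each x ∈ X and k ∈ ℕ there is a unique offset r ∈ {0,…,2^{k+1}−1} such that on
each interval [r + m·2^{k+1}, r + (m+1)·2^{k+1}) the subword of x is u_k ū_k or ū_k u_k. -/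
theorem morse_unique_partition_double :
    ∀ x ∈ morseShiftX, ∀ k : ℕ,
      ∃! r : ℕ, r < 2 ^ (k + 1) ∧ ∀ m : ℤ,
        readsWord x ((r : ℤ) + m * 2 ^ (k + 1)) (uWord k ++ flipWord (uWord k)) ∨
        readsWord x ((r : ℤ) + m * 2 ^ (k + 1)) (flipWord (uWord k) ++ uWord k) := by
  intro x hx k
  obtain ⟨r, hr⟩ :=
    exists_forall_isMorsePartition_iff_modEq (overlapFree_of_mem_morseShiftX hx) (k + 1)
  have := existsUnique_nat_lt_of_forall_iff_modEq (N := 2 ^ (k + 1)) (by positivity)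
    (by exact_mod_cast hr)
  simpa only [IsMorsePartition, IsMorseBlock, uWord_succ, flipWord_append,
    flipWord_flipWord] using this
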